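/- Let A be a finite abelian group with a nondegenerate quadratic function q, and let (B,β) be a Schellekens pair for (A,q). Then the subgroup Γ(B,β) of A × A has order equal to the order of A. -/
import Mathlib


/-- The bicharacter `σ(a,b) = q(ab) q(a)⁻¹ q(b)⁻¹` associated to `q`. -/
def qSigma {A : Type*} [CommGroup A] (q : A → ℂˣ) (a b : A) : ℂˣ :=
  q (a * b) * (q a)⁻¹ * (q b)⁻¹

/-- `q` is a quadratic function: `q(a⁻¹) = q(a)` and the associated `σ` is
multiplicative in each argument. -/
def IsQuadratic {A : Type*} [CommGroup A] (q : A → ℂˣ) : Prop :=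
  (∀ a : A, q a⁻¹ = q a) ∧
  (∀ a b c : A, qSigma q (a * b) c = qSigma q a c * qSigma q b c) ∧
  (∀ a b c : A, qSigma q a (b * c) = qSigma q a b * qSigma q a c)

/-- `q` is nondegenerate: for every `a ≠ 1` the homomorphism `σ(a,−)` is nontrivial. -/
def IsNondeg {A : Type*} [CommGroup A] (q : A → ℂˣ) : Prop :=
  ∀ a : A, a ≠ 1 → ∃ b : A, qSigma q a b ≠ 1

/-- `(B, β)` is a Schellekens pair for `(A, q)`: `β` is symmetric, multiplicative
in each argument, and `β(b,b) = q(b)` on the subgroup `B`. -/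
def IsSchellekens {A : Type*} [CommGroup A] (q : A → ℂˣ) (B : Subgroup A)
    (β : B → B → ℂˣ) : Prop :=
  (∀ b c : B, β b c = β c b) ∧
  (∀ b c d : B, β (b * c) d = β b d * β c d) ∧
  (∀ b c d : B, β b (c * d) = β b c * β b d) ∧
  (∀ b : B, β b b = q (b : A))

/-- `Γ(B,β) = {(a, a⁻¹ b) | a ∈ A, b ∈ B, σ(c,a) = β(c,b) ∀ c ∈ B}` as a subset of `A × A`. -/
def GammaSet {A : Type*} [CommGroup A] (q : A → ℂˣ) (B : Subgroup A)
    (β : B → B → ℂˣ) : Set (A × A) :=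
  {z | ∃ b : B, z.2 = z.1⁻¹ * (b : A) ∧ ∀ c : B, qSigma q (c : A) z.1 = β c b}

/-- The bicharacter `τ((a,b),(c,d)) = σ(a,c) σ(b,d)⁻¹` on `A × A`
associated to the quadratic function `q × q⁻¹`. -/
def qTau {A : Type*} [CommGroup A] (q : A → ℂˣ) (z w : A × A) : ℂˣ :=
  qSigma q z.1 w.1 * (qSigma q z.2 w.2)⁻¹

lemma qSigma_comm {A : Type*} [CommGroup A] (q : A → ℂˣ) (a b : A) :
    qSigma q a b = qSigma q b a := by
  unfold qSigma; rw [mul_comm a b, mul_right_comm]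

lemma qSigma_one_right {A : Type*} [CommGroup A] {q : A → ℂˣ} (hq : IsQuadratic q) (a : A) :
    qSigma q a 1 = 1 := by
  have h := hq.2.2 a 1 1
  rw [one_mul] at h
  exact mul_left_cancel (a := qSigma q a 1) (by rw [mul_one, ← h])

lemma qSigma_one_left {A : Type*} [CommGroup A] {q : A → ℂˣ} (hq : IsQuadratic q) (a : A) :
    qSigma q 1 a = 1 := by rw [qSigma_comm]; exact qSigma_one_right hq a

lemma card_dual (G : Type*) [CommGroup G] [Finite G] :
    Nat.card (G →* ℂˣ) = Nat.card G := by
  have : NeZero ((Monoid.exponent G : ℂ)) :=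
    ⟨by exact_mod_cast Monoid.exponent_ne_zero_of_finite⟩
  obtain ⟨e⟩ := CommGroup.monoidHom_mulEquiv_of_hasEnoughRootsOfUnity G ℂ
  exact Nat.card_congr e.toEquiv

def resHom {G : Type*} [CommGroup G] (B : Subgroup G) : (G →* ℂˣ) →* (B →* ℂˣ) where
  toFun χ := χ.comp B.subtype
  map_one' := MonoidHom.one_comp _
  map_mul' _ _ := MonoidHom.mul_comp _ _ _

def kerResEquiv {G : Type*} [CommGroup G] (B : Subgroup G) :
    (G ⧸ B →* ℂˣ) ≃ (resHom B).ker where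
  toFun χ := ⟨χ.comp (QuotientGroup.mk' B), by
    rw [MonoidHom.mem_ker]
    refine MonoidHom.ext fun b => ?_
    show χ (QuotientGroup.mk (b : G)) = 1
    rw [(QuotientGroup.eq_one_iff _).mpr b.2, map_one]⟩
  invFun ψ := QuotientGroup.lift B ψ.val (fun b hb => by
    have := congrArg (fun (φ : B →* ℂˣ) => φ ⟨b, hb⟩) ψ.2
    simpa [resHom] using this)
  left_inv χ := by
    ext x
    rfl
  right_inv ψ := by
    apply Subtype.ext
    ext a
    rfl

lemma resHom_surjective {G : Type*} [CommGroup G] [Finite G] (B : Subgroup G) :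
    Function.Surjective (resHom B) := by
  have hfin : Finite (G →* ℂˣ) :=
    Nat.finite_of_card_ne_zero (by rw [card_dual]; exact Nat.card_pos.ne')
  have hfin2 : Finite (B →* ℂˣ) :=
    Nat.finite_of_card_ne_zero (by rw [card_dual]; exact Nat.card_pos.ne')
  have hker : Nat.card (resHom B).ker = Nat.card (G ⧸ B) := by
    rw [← Nat.card_congr (kerResEquiv B), card_dual]
  have h1 : Nat.card (G →* ℂˣ) =
      Nat.card ((G →* ℂˣ) ⧸ (resHom B).ker) * Nat.card (resHom B).ker :=
    Subgroup.card_eq_card_quotient_mul_card_subgroup _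
  have h2 : Nat.card ((G →* ℂˣ) ⧸ (resHom B).ker) = Nat.card (resHom B).range :=
    Nat.card_congr (QuotientGroup.quotientKerEquivRange (resHom B)).toEquiv
  have h3 : Nat.card G = Nat.card (G ⧸ B) * Nat.card B :=
    Subgroup.card_eq_card_quotient_mul_card_subgroup B
  have hq0 : Nat.card (G ⧸ B) ≠ 0 := Nat.card_pos.ne'
  rw [h2, hker, card_dual, h3] at h1
  have hrange : Nat.card (resHom B).range = Nat.card B :=
    Nat.eq_of_mul_eq_mul_left (Nat.pos_of_ne_zero hq0)
      (by rw [mul_comm (Nat.card (resHom B).range)] at h1; exact h1.symm)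
  haveI : Finite ((resHom B).range : Subgroup (B →* ℂˣ)) := Subtype.finite
  rw [← MonoidHom.range_eq_top]
  exact Subgroup.eq_top_of_card_eq _ (by rw [hrange, card_dual])

def sigmaHom {A : Type*} [CommGroup A] {q : A → ℂˣ} (hq : IsQuadratic q) : A →* (A →* ℂˣ) where
  toFun a :=
  { toFun := fun c => qSigma q c a
    map_one' := qSigma_one_left hq a
    map_mul' := fun b c => hq.2.1 b c a }
  map_one' := MonoidHom.ext fun c => qSigma_one_right hq c
  map_mul' a b := MonoidHom.ext fun c => hq.2.2 c a b

lemma sigmaHom_bijective {A : Type*} [CommGroup A] [Finite A] {q : A → ℂˣ}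
    (hq : IsQuadratic q) (hnd : IsNondeg q) : Function.Bijective (sigmaHom hq) := by
  have hfin : Finite (A →* ℂˣ) :=
    Nat.finite_of_card_ne_zero (by rw [card_dual]; exact Nat.card_pos.ne')
  rw [Nat.bijective_iff_injective_and_card]
  refine ⟨?_, (card_dual A).symm⟩
  rw [injective_iff_map_eq_one]
  intro a ha
  by_contra hne
  obtain ⟨b, hb⟩ := hnd a hne
  apply hb
  have := congrArg (fun φ : A →* ℂˣ => φ b) ha
  simpa [sigmaHom, qSigma_comm q b a] using this

lemma beta_one_right {A : Type*} [CommGroup A] {q : A → ℂˣ} {B : Subgroup A}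
    {β : B → B → ℂˣ} (hβ : IsSchellekens q B β) (c : B) : β c 1 = 1 := by
  have h := hβ.2.2.1 c 1 1
  rw [one_mul] at h
  exact mul_left_cancel (a := β c 1) (by rw [mul_one, ← h])

def betaHom {A : Type*} [CommGroup A] {q : A → ℂˣ} {B : Subgroup A}
    {β : B → B → ℂˣ} (hβ : IsSchellekens q B β) : B →* (B →* ℂˣ) where
  toFun b :=
  { toFun := fun c => β c b
    map_one' := by show β 1 b = 1; rw [hβ.1]; exact beta_one_right hβ b
    map_mul' := fun c d => hβ.2.1 c d b }
  map_one' := MonoidHom.ext fun c => beta_one_right hβ c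
  map_mul' b b' := MonoidHom.ext fun c => hβ.2.2.1 c b b'

/-- the subgroup `Γ(B,β)` of `A × A` has order equal to the order of `A`. -/
theorem gamma_card {A : Type*} [CommGroup A] [Fintype A]
    (q : A → ℂˣ) (hq : IsQuadratic q) (hnd : IsNondeg q)
    (B : Subgroup A) (β : B → B → ℂˣ) (hβ : IsSchellekens q B β)
    (Γ : Subgroup (A × A)) (hΓ : (Γ : Set (A × A)) = GammaSet q B β) :
    Nat.card Γ = Nat.card A := by
  classical
  let f : A →* (B →* ℂˣ) := (resHom B).comp (sigmaHom hq)
  have hf : Function.Surjective f :=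
    (resHom_surjective B).comp (sigmaHom_bijective hq hnd).2
  let g : B →* (B →* ℂˣ) := betaHom hβ
  let h : A × B →* (B →* ℂˣ) :=
    (f.comp (MonoidHom.fst A B)) * ((g.comp (MonoidHom.snd A B)))⁻¹
  have happ : ∀ (a : A) (b : B), h (a, b) = f a * (g b)⁻¹ := fun a b => rfl
  have hh : Function.Surjective h := fun d => by
    obtain ⟨a, ha⟩ := hf d
    refine ⟨(a, 1), MonoidHom.ext fun c => ?_⟩
    rw [happ]
    simp [ha]
  have hiff : ∀ z : A × A, z ∈ Γ ↔
      ∃ b : B, z.2 = z.1⁻¹ * (b : A) ∧ ∀ c : B, qSigma q (c : A) z.1 = β c b := fun z => by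
    rw [← SetLike.mem_coe, hΓ]; exact Iff.rfl
  have hkiff : ∀ (a : A) (b : B), (a, b) ∈ h.ker ↔ ∀ c : B, qSigma q (c : A) a = β c b := by
    intro a b
    have hone : ∀ x y : B →* ℂˣ, x * y⁻¹ = 1 ↔ x = y := fun x y => mul_inv_eq_one (G := B →* ℂˣ)
    rw [MonoidHom.mem_ker, happ, hone]
    constructor
    · intro he c
      exact congrArg (fun φ : B →* ℂˣ => φ c) he
    · intro he
      exact MonoidHom.ext he
  have hmem : ∀ z : A × A, z ∈ Γ → z.1 * z.2 ∈ B := fun z hz => by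
    obtain ⟨b, h1, -⟩ := (hiff z).mp hz
    rw [h1, mul_inv_cancel_left]
    exact b.2
  have e : Γ ≃ h.ker :=
  { toFun := fun z => ⟨(z.val.1, ⟨z.val.1 * z.val.2, hmem z.val z.2⟩), by
      obtain ⟨b, h1, h2⟩ := (hiff z.val).mp z.2
      rw [hkiff]
      have hb : (⟨z.val.1 * z.val.2, hmem z.val z.2⟩ : B) = b :=
        Subtype.ext (show z.val.1 * z.val.2 = (b : A) by rw [h1, mul_inv_cancel_left])
      exact fun c => (h2 c).trans (congrArg (β c) hb.symm)⟩
    invFun := fun w => ⟨(w.val.1, w.val.1⁻¹ * (w.val.2 : A)), by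
      rw [hiff]
      exact ⟨w.val.2, rfl, (hkiff w.val.1 w.val.2).mp (by
        have := w.2; rwa [show ((w.val.1, w.val.2) : A × B) = w.val from rfl])⟩⟩
    left_inv := fun z => Subtype.ext (Prod.ext rfl (by simp))
    right_inv := fun w => Subtype.ext (Prod.ext rfl (Subtype.ext (by simp))) }
  have c1 : Nat.card (A × B) = Nat.card ((A × B) ⧸ h.ker) * Nat.card h.ker :=
    Subgroup.card_eq_card_quotient_mul_card_subgroup _
  have c2 : Nat.card ((A × B) ⧸ h.ker) = Nat.card (B →* ℂˣ) :=
    Nat.card_congr (QuotientGroup.quotientKerEquivOfSurjective h hh).toEquiv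
  rw [Nat.card_prod, c2, card_dual] at c1
  have hB0 : 0 < Nat.card B := Nat.card_pos
  rw [Nat.card_congr e]
  rw [mul_comm (Nat.card A)] at c1
  exact (Nat.eq_of_mul_eq_mul_left hB0 c1).symm
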